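/- Let ℓ ≥ 2 and let A_1 ≥ A_2 ≥ … ≥ A_ℓ ≥ 0 be real numbers. Suppose ∑_{i=1}^{j} A_i ≤ j·A_{j+1} + j for every j with 2 ≤ j ≤ ℓ−1, and ∑_{i=1}^{ℓ} A_i ≤ 2ℓ − 1. Then (A_1 + A_2)/2 ≤ H_{ℓ-1} + 1/2. -/

import Mathlib

/-- The m-th harmonicR number H_m = ∑_{j=1}^m 1/j. -/
noncomputable def harmonicR (m : ℕ) : ℝ := ∑ j ∈ Finset.range m, 1 / (j + 1 : ℝ)

/-!
Write `S j = A 1 + ⋯ + A j`. Adding `A (j + 1) ≥ (S j - j) / j` to `S j` gives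
`S j / j ≤ S (j + 1) / (j + 1) + 1 / (j + 1)`, i.e. the average `S j / j` plus `H j` is
nondecreasing in `j` on `[2, l]`. Comparing its values at `2` and at `l`, where
`S l / l ≤ 2 - 1 / l`, gives `(A 1 + A 2) / 2 + 3 / 2 ≤ H l + 2 - 1 / l = H (l - 1) + 2`.
-/

open Finset

lemma harmonicR_succ (m : ℕ) : harmonicR (m + 1) = harmonicR m + 1 / (m + 1) := by
  simp only [harmonicR, sum_range_succ]

lemma harmonicR_two : harmonicR 2 = 3 / 2 := by
  norm_num [harmonicR, sum_range_succ]

lemma div_le_div_succ_add_inv {S a j : ℝ} (hj : 0 < j) (h : S ≤ j * a + j) :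
    S / j ≤ (S + a) / (j + 1) + 1 / (j + 1) := by
  rw [← add_div, div_le_div_iff₀ hj (by linarith)]
  nlinarith

lemma monotoneOn_sum_Icc_div_add_harmonicR (A : ℕ → ℝ) (l : ℕ)
    (hineq : ∀ j : ℕ, 2 ≤ j → j ≤ l - 1 →
      ∑ i ∈ Icc 1 j, A i ≤ (j : ℝ) * A (j + 1) + (j : ℝ)) :
    MonotoneOn (fun j : ℕ ↦ (∑ i ∈ Icc 1 j, A i) / j + harmonicR j) (Set.Icc 2 l) := by
  refine monotoneOn_of_le_succ Set.ordConnected_Icc fun j _ hj hj' ↦ ?_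
  simp only [Order.succ_eq_add_one, Set.mem_Icc] at hj hj' ⊢
  have hstep := div_le_div_succ_add_inv (by exact_mod_cast (by omega : 0 < j)) (hineq j hj.1 (by omega))
  rw [sum_Icc_succ_top (by omega), harmonicR_succ]
  push_cast
  linarith

theorem stmt_5_general (l : ℕ) (hl : 2 ≤ l) (A : ℕ → ℝ)
    (hineq : ∀ j : ℕ, 2 ≤ j → j ≤ l - 1 →
      ∑ i ∈ Finset.Icc 1 j, A i ≤ (j : ℝ) * A (j + 1) + (j : ℝ))
    (hlast : ∑ i ∈ Finset.Icc 1 l, A i ≤ 2 * (l : ℝ) - 1) :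
    (A 1 + A 2) / 2 ≤ harmonicR (l - 1) + 1 / 2 := by
  have hmono := monotoneOn_sum_Icc_div_add_harmonicR A l hineq
    ⟨le_rfl, hl⟩ ⟨hl, le_rfl⟩ hl
  have hsum_two : ∑ i ∈ Icc 1 2, A i = A 1 + A 2 := by
    rw [sum_Icc_succ_top (by norm_num), Icc_self, sum_singleton]
  have hl_pos : (0 : ℝ) < l := by exact_mod_cast (by omega : 0 < l)
  have havg : (∑ i ∈ Icc 1 l, A i) / l ≤ 2 - 1 / l := by
    rw [div_le_iff₀ hl_pos, sub_mul, one_div_mul_cancel hl_pos.ne']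
    exact hlast
  have hH : harmonicR l = harmonicR (l - 1) + 1 / l := by
    obtain ⟨m, rfl⟩ := Nat.exists_eq_add_of_le' (by omega : 1 ≤ l)
    rw [harmonicR_succ, Nat.add_sub_cancel]
    push_cast
    ring
  simp only [hsum_two, harmonicR_two] at hmono
  push_cast at hmono
  linarith

theorem stmt_5 (l : ℕ) (hl : 2 ≤ l) (A : ℕ → ℝ)
    (hmono : ∀ i : ℕ, 1 ≤ i → i < l → A (i + 1) ≤ A i)
    (hnonneg : 0 ≤ A l)
    (hineq : ∀ j : ℕ, 2 ≤ j → j ≤ l - 1 →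
      ∑ i ∈ Finset.Icc 1 j, A i ≤ (j : ℝ) * A (j + 1) + (j : ℝ))
    (hlast : ∑ i ∈ Finset.Icc 1 l, A i ≤ 2 * (l : ℝ) - 1) :
    (A 1 + A 2) / 2 ≤ harmonicR (l - 1) + 1 / 2 :=
  stmt_5_general l hl A hineq hlast
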